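/- arXiv:1609.03031 — 5 statements merged into one kernel-verified Lean document; each statement's English description precedes it below -/
import Mathlib

section
/- Let N and M be positive definite ternary forms and n a positive integer such that (N, M) is a representable pair by scaling n. Then n·Q_N is represented by M; that is, there exists an injective ℤ-linear map S : ℤ³ → ℤ³ with Q_M(S v) = n·Q_N(v) for all v ∈ ℤ³. -/
/-- A ternary quadratic form `Q(x,y,z) = ax² + by² + cz² + r·yz + s·zx + t·xy`
with integer coefficients. -/
structure TernaryForm where
  a : ℤ
  b : ℤ
  c : ℤ
  r : ℤ
  s : ℤ
  t : ℤ

/-- Evaluation of a ternary form on `R³` for any commutative ring `R`. -/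
def TernaryForm.eval {R : Type*} [CommRing R] (Q : TernaryForm) (v : Fin 3 → R) : R :=
  (Q.a : R) * v 0 ^ 2 + (Q.b : R) * v 1 ^ 2 + (Q.c : R) * v 2 ^ 2 +
    (Q.r : R) * v 1 * v 2 + (Q.s : R) * v 2 * v 0 + (Q.t : R) * v 0 * v 1

/-- A ternary form is positive definite if `Q(v) > 0` for all `v ≠ 0`. -/
def TernaryForm.PosDef (Q : TernaryForm) : Prop :=
  ∀ v : Fin 3 → ℤ, v ≠ 0 → 0 < Q.eval v

/-- The Gram matrix of a ternary form: the symmetric rational matrix `G`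
with `Q(v) = vᵀ G v`. -/
def TernaryForm.gram (Q : TernaryForm) : Matrix (Fin 3) (Fin 3) ℚ :=
  !![(Q.a : ℚ), (Q.t : ℚ) / 2, (Q.s : ℚ) / 2;
     (Q.t : ℚ) / 2, (Q.b : ℚ), (Q.r : ℚ) / 2;
     (Q.s : ℚ) / 2, (Q.r : ℚ) / 2, (Q.c : ℚ)]

/-- The discriminant of a ternary form: the determinant of its Gram matrix. -/
def TernaryForm.disc (Q : TernaryForm) : ℚ := Q.gram.det

/-- `(N, M)` is a representable pair by scaling `n` if `dN = n·dM` and there is a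
`ℤ`-linear map `T : ℤ³ → ℤ³` with `Q_N(T v) = n · Q_M(v)` for all `v`. -/
def RepPair (n : ℕ) (N M : TernaryForm) : Prop :=
  N.disc = (n : ℚ) * M.disc ∧
    ∃ T : (Fin 3 → ℤ) →ₗ[ℤ] (Fin 3 → ℤ), ∀ v, N.eval (T v) = (n : ℤ) * M.eval v

/-- The norm ideal of a subset `K ⊆ ℤ³`: the ideal of `ℤ` generated by `{Q(x) : x ∈ K}`. -/
def TernaryForm.normIdeal (Q : TernaryForm) (K : Set (Fin 3 → ℤ)) : Ideal ℤ :=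
  Ideal.span (Q.eval '' K)

/-- A ternary form is primitive if the norm ideal of `ℤ³` is all of `ℤ`. -/
def TernaryForm.Primitive (Q : TernaryForm) : Prop :=
  Q.normIdeal Set.univ = ⊤

/-- `Λ_p(N) = {x ∈ ℤ³ : Q_N(x + z) ≡ Q_N(z) (mod p) for all z ∈ ℤ³}`. -/
def LambdaSet (p : ℕ) (N : TernaryForm) : Set (Fin 3 → ℤ) :=
  {x | ∀ z : Fin 3 → ℤ, (p : ℤ) ∣ N.eval (x + z) - N.eval z}

/-- `M` is a `Γ_p`-descendant of `N` if there is a subgroup `K ≤ ℤ³` of index `p` with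
norm ideal `pℤ` and a group isomorphism `T : ℤ³ → K` with `Q_N(T v) = p · Q_M(v)`. -/
def GammaDescendant (p : ℕ) (M N : TernaryForm) : Prop :=
  ∃ K : AddSubgroup (Fin 3 → ℤ), K.index = p ∧
    N.normIdeal (K : Set (Fin 3 → ℤ)) = Ideal.span {(p : ℤ)} ∧
    ∃ T : (Fin 3 → ℤ) →+ (Fin 3 → ℤ), Function.Injective T ∧
      Set.range T = (K : Set (Fin 3 → ℤ)) ∧
      ∀ v, N.eval (T v) = (p : ℤ) * M.eval v

/-- `N` is `p`-hyperbolic with exponent `j` if over `ℤ_p` there are a unit `δ` and a basis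
`y₁, y₂, y₃` of `ℤ_p³` with `Q_N(a y₁ + b y₂ + c y₃) = ab + δ p^j c²`. -/
def IsHyperbolic (p : ℕ) [Fact p.Prime] (j : ℕ) (N : TernaryForm) : Prop :=
  ∃ δ : ℤ_[p], IsUnit δ ∧ ∃ B : Module.Basis (Fin 3) ℤ_[p] (Fin 3 → ℤ_[p]),
    ∀ a b c : ℤ_[p],
      N.eval (a • B 0 + b • B 1 + c • B 2) = a * b + δ * (p : ℤ_[p]) ^ j * c ^ 2

/-- Two ternary forms lie in the same genus if they are equivalent over `ℤ_ℓ`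
for every prime `ℓ`. -/
def SameGenus (M M' : TernaryForm) : Prop :=
  ∀ (ℓ : ℕ) [Fact ℓ.Prime], ∃ U : Matrix (Fin 3) (Fin 3) ℤ_[ℓ],
    IsUnit U.det ∧ ∀ v : Fin 3 → ℤ_[ℓ], M'.eval v = M.eval (U.mulVec v)

/-!
Write `T` as an integral matrix `A`. The identity `Q_N(A v) = n Q_M(v)` on `ℤ³` says
`Aᵀ G_N A = n G_M` for the Gram matrices, so taking determinants and using `dN = n dM ≠ 0` gives
`(det A)² = n²`. The adjugate then represents `n Q_N` by `M`: from `A (adj A) = (det A) I`,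
`n Q_M(adj A v) = Q_N((det A) v) = n² Q_N(v)`, and `det (adj A) = (det A)² ≠ 0`.
-/

open Matrix

theorem Matrix.eq_of_isSymm_of_forall_intCast_dotProduct_mulVec {ι K : Type*} [Fintype ι]
    [DecidableEq ι] [Field K] [CharZero K] {X Y : Matrix ι ι K} (hX : X.IsSymm) (hY : Y.IsSymm)
    (h : ∀ v : ι → ℤ, (Int.cast ∘ v : ι → K) ⬝ᵥ X *ᵥ (Int.cast ∘ v) =
      (Int.cast ∘ v) ⬝ᵥ Y *ᵥ (Int.cast ∘ v)) :
    X = Y := by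
  rw [← sub_eq_zero]
  set D := X - Y
  have hq (v : ι → ℤ) : (Int.cast ∘ v : ι → K) ⬝ᵥ D *ᵥ (Int.cast ∘ v) = 0 := by
    simp only [D, sub_mulVec, dotProduct_sub, h v, sub_self]
  have hsingle (i : ι) : (Int.cast ∘ Pi.single i 1 : ι → K) = Pi.single i 1 := by
    funext k; simp [Pi.single_apply, apply_ite]
  have hdiag (i : ι) : D i i = 0 := by
    simpa [hsingle, mulVec_single_one] using hq (Pi.single i 1)
  ext i j
  have hij := hq (Pi.single i 1 + Pi.single j 1)
  have hsymm : D j i = D i j := (hX.sub hY).apply i j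
  have hpair : (Int.cast ∘ (Pi.single i 1 + Pi.single j 1) : ι → K) =
      Pi.single i 1 + Pi.single j 1 := by
    rw [← hsingle, ← hsingle]; funext k; simp
  simpa [hpair, mulVec_add, add_dotProduct, dotProduct_add, hdiag, hsymm] using hij

theorem Rat.exists_intCast_comp_eq_smul {ι : Type*} [Finite ι] (v : ι → ℚ) :
    ∃ d : ℤ, d ≠ 0 ∧ ∃ w : ι → ℤ, Int.cast ∘ w = (d : ℚ) • v := by
  obtain ⟨b, hb⟩ := IsLocalization.exist_integer_multiples_of_finite (nonZeroDivisors ℤ) v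
  choose w hw using hb
  refine ⟨b, nonZeroDivisors.coe_ne_zero b, w, funext fun i => ?_⟩
  simpa [zsmul_eq_mul] using hw i

namespace TernaryForm

theorem map_eval {R S : Type*} [CommRing R] [CommRing S] (f : R →+* S) (Q : TernaryForm)
    (v : Fin 3 → R) : f (Q.eval v) = Q.eval (f ∘ v) := by
  simp [eval]

theorem intCast_eval (Q : TernaryForm) (v : Fin 3 → ℤ) :
    ((Q.eval v : ℤ) : ℚ) = Q.eval (Int.cast ∘ v : Fin 3 → ℚ) :=
  Q.map_eval (Int.castRingHom ℚ) v

theorem eval_smul {R : Type*} [CommRing R] (Q : TernaryForm) (c : R) (v : Fin 3 → R) :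
    Q.eval (c • v) = c ^ 2 * Q.eval v := by
  simp only [eval, Pi.smul_apply, smul_eq_mul]
  ring

theorem eval_eq_dotProduct_gram_mulVec (Q : TernaryForm) (v : Fin 3 → ℚ) :
    Q.eval v = v ⬝ᵥ Q.gram *ᵥ v := by
  simp only [eval, dotProduct, mulVec, gram, of_apply, cons_val', cons_val_fin_one,
    Fin.sum_univ_three, cons_val_zero, cons_val_one, cons_val]
  ring

theorem isSymm_gram (Q : TernaryForm) : Q.gram.IsSymm := by
  ext i j
  fin_cases i <;> fin_cases j <;> simp [gram]

theorem PosDef.disc_ne_zero {Q : TernaryForm} (hQ : Q.PosDef) : Q.disc ≠ 0 := by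
  intro h0
  obtain ⟨v, hv, hGv⟩ := exists_mulVec_eq_zero_iff.2 h0
  obtain ⟨d, hd, w, hw⟩ := Rat.exists_intCast_comp_eq_smul v
  have hw0 : w ≠ 0 := by
    rintro rfl
    have : (d : ℚ) • v = 0 := by rw [← hw]; rfl
    exact hv ((smul_eq_zero.1 this).resolve_left (by exact_mod_cast hd))
  have : ((Q.eval w : ℤ) : ℚ) = 0 := by
    rw [intCast_eval, hw, eval_eq_dotProduct_gram_mulVec, mulVec_smul, hGv]
    simp
  exact (hQ w hw0).ne' (by exact_mod_cast this)

variable {N M : TernaryForm} {A : Matrix (Fin 3) (Fin 3) ℤ} {n : ℤ}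

theorem gram_conj_eq_smul_gram (h : ∀ v, N.eval (A *ᵥ v) = n * M.eval v) :
    (A.map (Int.cast : ℤ → ℚ))ᵀ * N.gram * A.map Int.cast = (n : ℚ) • M.gram := by
  refine eq_of_isSymm_of_forall_intCast_dotProduct_mulVec ?_ (M.isSymm_gram.smul _) fun v => ?_
  · simp only [IsSymm, transpose_mul, transpose_transpose, N.isSymm_gram.eq, Matrix.mul_assoc]
  · have hcast : A.map (Int.cast : ℤ → ℚ) *ᵥ (Int.cast ∘ v) = Int.cast ∘ (A *ᵥ v) :=
      funext fun i => (RingHom.map_mulVec (Int.castRingHom ℚ) A v i).symm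
    rw [Matrix.mul_assoc, ← mulVec_mulVec, dotProduct_mulVec, vecMul_transpose, ← mulVec_mulVec,
      hcast, ← eval_eq_dotProduct_gram_mulVec, smul_mulVec, dotProduct_smul,
      ← eval_eq_dotProduct_gram_mulVec, ← intCast_eval, ← intCast_eval, h, smul_eq_mul]
    push_cast; rfl

theorem det_sq_eq_sq_of_eval_mulVec (hM : M.disc ≠ 0) (hn : n ≠ 0) (hdisc : N.disc = n * M.disc)
    (h : ∀ v, N.eval (A *ᵥ v) = n * M.eval v) : A.det ^ 2 = n ^ 2 := by
  have hdet := congrArg det (gram_conj_eq_smul_gram h)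
  rw [det_mul, det_mul, det_transpose, det_smul, ← Int.cast_det, Fintype.card_fin] at hdet
  change (A.det : ℚ) * N.disc * A.det = n ^ 3 * M.disc at hdet
  have : ((A.det : ℚ) ^ 2 - n ^ 2) * (n * M.disc) = 0 := by
    linear_combination hdet - (A.det : ℚ) ^ 2 * hdisc
  have hnM : (n : ℚ) * M.disc ≠ 0 := mul_ne_zero (by exact_mod_cast hn) hM
  exact_mod_cast sub_eq_zero.1 ((mul_eq_zero.1 this).resolve_right hnM)

theorem eval_adjugate_mulVec (hn : n ≠ 0) (hdet : A.det ^ 2 = n ^ 2)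
    (h : ∀ v, N.eval (A *ᵥ v) = n * M.eval v) (v : Fin 3 → ℤ) :
    M.eval (A.adjugate *ᵥ v) = n * N.eval v := by
  have := h (A.adjugate *ᵥ v)
  rw [mulVec_mulVec, mul_adjugate, smul_mulVec, one_mulVec, eval_smul, hdet] at this
  exact mul_left_cancel₀ hn (by linear_combination -this)

end TernaryForm

theorem stmt_1_general (N M : TernaryForm) (hM : M.PosDef) (n : ℕ) (hn : 0 < n)
    (h : RepPair n N M) :
    ∃ S : (Fin 3 → ℤ) →ₗ[ℤ] (Fin 3 → ℤ), Function.Injective S ∧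
      ∀ v : Fin 3 → ℤ, M.eval (S v) = (n : ℤ) * N.eval v := by
  obtain ⟨hdisc, T, hT⟩ := h
  set A := LinearMap.toMatrix' T
  have hA (v : Fin 3 → ℤ) : N.eval (A *ᵥ v) = n * M.eval v := by
    rw [← toLin'_apply, toLin'_toMatrix', hT]
  have hn0 : (n : ℤ) ≠ 0 := by exact_mod_cast hn.ne'
  have hdet : A.det ^ 2 = n ^ 2 :=
    TernaryForm.det_sq_eq_sq_of_eval_mulVec hM.disc_ne_zero hn0 (by exact_mod_cast hdisc) hA
  refine ⟨toLin' A.adjugate, mulVec_injective_of_det_ne_zero ?_,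
    TernaryForm.eval_adjugate_mulVec hn0 hdet hA⟩
  rw [det_adjugate]
  exact pow_ne_zero _ (ne_zero_pow two_ne_zero (hdet ▸ pow_ne_zero 2 hn0))

/-- If `(N, M)` is a representable pair by scaling `n`, then `n·Q_N` is
represented by `M` via an injective `ℤ`-linear map. -/
theorem stmt_1 (N M : TernaryForm) (hN : N.PosDef) (hM : M.PosDef) (n : ℕ) (hn : 0 < n)
    (h : RepPair n N M) :
    ∃ S : (Fin 3 → ℤ) →ₗ[ℤ] (Fin 3 → ℤ), Function.Injective S ∧
      ∀ v : Fin 3 → ℤ, M.eval (S v) = (n : ℤ) * N.eval v :=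
  stmt_1_general N M hM n hn h
end

section
/- Let p be a prime and let N be a primitive positive definite ternary form which is p-hyperbolic with exponent j for some integer j ≥ 1. Then there exist exactly two subgroups K of ℤ³ of index p with norm ideal 𝔫(K) = pℤ. -/
/-!
Over `ℤ_p` we have `N = y₁ y₂ + δ pʲ y₃²` with `j ≥ 1`, so modulo `p` the form factors as a
product `A · B` of two independent linear forms `ℤ³ → 𝔽_p`. A subgroup on which `N ≡ 0 (mod p)`
lies in `ker A ∪ ker B`, hence in one of them (a group is never the union of two proper
subgroups), and if its index is `p` it equals that kernel. Conversely `ker A ⊇ pℤ³`, so by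
primitivity `p² ∈ 𝔫(ker A)`; a vector with coordinates `(p, 1, 0)` modulo `p²` lies in `ker A`
and has norm `≡ p (mod p²)`, so `𝔫(ker A) = pℤ`, and symmetrically for `ker B`.
-/

open PadicInt

theorem AddSubgroup.eq_of_le_of_index_eq {G : Type*} [AddGroup G] {H K : AddSubgroup G}
    (hle : H ≤ K) (hidx : H.index = K.index) (hH : H.index ≠ 0) : H = K := by
  have : H.FiniteIndex := ⟨hH⟩
  by_contra hne
  exact (AddSubgroup.index_strictAnti (hle.lt_of_ne hne)).ne' hidx

theorem AddMonoidHom.index_ker_of_map_eq_one {G : Type*} [AddGroup G] {n : ℕ}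
    (f : G →+ ZMod n) {x : G} (hx : f x = 1) : f.ker.index = n := by
  have hsurj : Function.Surjective f := fun y => by
    obtain ⟨k, rfl⟩ := ZMod.intCast_surjective y
    exact ⟨k • x, by simp [hx]⟩
  rw [AddSubgroup.index_ker, AddMonoidHom.range_eq_top.2 hsurj, AddSubgroup.card_top,
    Nat.card_zmod]

theorem AddMonoidHom.natCast_zsmul_mem_ker {G : Type*} [AddGroup G] {n : ℕ}
    (f : G →+ ZMod n) (v : G) : (n : ℤ) • v ∈ f.ker := by
  simp [AddMonoidHom.mem_ker]

section Padic

variable {p : ℕ} [Fact p.Prime]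

theorem PadicInt.toZModPow_pow_self (n : ℕ) : toZModPow n ((p : ℤ_[p]) ^ n) = 0 := by
  rw [← RingHom.mem_ker, ker_toZModPow]
  exact Ideal.mem_span_singleton_self _

theorem PadicInt.exists_intCast_eq_add_pow_smul {ι : Type*} (t : ι → ℤ_[p]) (n : ℕ) :
    ∃ (x : ι → ℤ) (w : ι → ℤ_[p]), (fun i => (x i : ℤ_[p])) = t + (p : ℤ_[p]) ^ n • w := by
  have h (i : ι) : ∃ w : ℤ_[p], (((t i).appr n : ℕ) : ℤ_[p]) = t i + (p : ℤ_[p]) ^ n * w := by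
    obtain ⟨w, hw⟩ := Ideal.mem_span_singleton'.1 (appr_spec n (t i))
    exact ⟨-w, by linear_combination hw⟩
  choose w hw using h
  exact ⟨fun i => ((t i).appr n : ℤ), w, funext fun i => by simpa using hw i⟩

theorem Module.Basis.exists_toZModPow_repr_intCast_eq {ι κ : Type*} [Fintype κ]
    (B : Module.Basis κ ℤ_[p] (ι → ℤ_[p])) (n : ℕ) (α : κ → ℤ_[p]) :
    ∃ x : ι → ℤ, ∀ k, toZModPow n (B.repr (fun i => (x i : ℤ_[p])) k) = toZModPow n (α k) := by
  obtain ⟨x, w, hx⟩ := exists_intCast_eq_add_pow_smul (B.equivFun.symm α) n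
  refine ⟨x, fun k => ?_⟩
  rw [hx, map_add, map_smul, Finsupp.add_apply, Finsupp.smul_apply, ← B.equivFun_apply,
    LinearEquiv.apply_symm_apply, smul_eq_mul, map_add, map_mul, toZModPow_pow_self, zero_mul,
    add_zero]

end Padic

namespace TernaryForm

theorem eval_intCast {R : Type*} [CommRing R] (Q : TernaryForm) (x : Fin 3 → ℤ) :
    ((Q.eval x : ℤ) : R) = Q.eval (fun i => (x i : R)) := by
  simp only [eval]
  push_cast
  ring

theorem eval_zsmul (Q : TernaryForm) (n : ℤ) (v : Fin 3 → ℤ) :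
    Q.eval (n • v) = n ^ 2 * Q.eval v := by
  simp only [eval, Pi.smul_apply, smul_eq_mul]
  ring

theorem eval_eq_repr_mul_repr_add {R : Type*} [CommRing R] {Q : TernaryForm} {d : R}
    {B : Module.Basis (Fin 3) R (Fin 3 → R)}
    (hB : ∀ a b c : R, Q.eval (a • B 0 + b • B 1 + c • B 2) = a * b + d * c ^ 2)
    (v : Fin 3 → R) : Q.eval v = B.repr v 0 * B.repr v 1 + d * B.repr v 2 ^ 2 := by
  conv_lhs => rw [← B.sum_repr v, Fin.sum_univ_three]
  exact hB _ _ _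

theorem sq_mem_normIdeal {Q : TernaryForm} (hQ : Q.Primitive) {K : AddSubgroup (Fin 3 → ℤ)}
    {n : ℤ} (hK : ∀ v, n • v ∈ K) : n ^ 2 ∈ Q.normIdeal K := by
  have h : Ideal.span {n ^ 2} * Q.normIdeal Set.univ ≤ Q.normIdeal K := by
    rw [normIdeal, normIdeal, Ideal.span_mul_span', Set.singleton_mul]
    refine Ideal.span_mono ?_
    rintro _ ⟨_, ⟨v, -, rfl⟩, rfl⟩
    exact ⟨n • v, hK v, eval_zsmul Q n v⟩
  rw [hQ, Ideal.mul_top] at h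
  exact h (Ideal.mem_span_singleton_self _)

theorem normIdeal_eq_span_prime {Q : TernaryForm} (hQ : Q.Primitive) {p : ℤ} (hp : Prime p)
    {K : AddSubgroup (Fin 3 → ℤ)} (hpK : ∀ v, p • v ∈ K) (hdvd : ∀ x ∈ K, p ∣ Q.eval x)
    {x : Fin 3 → ℤ} (hx : x ∈ K) (hx2 : ¬ p ^ 2 ∣ Q.eval x) :
    Q.normIdeal K = Ideal.span {p} := by
  refine le_antisymm (Ideal.span_le.2 ?_) ((Ideal.span_singleton_le_iff_mem _).2 ?_)
  · rintro _ ⟨y, hy, rfl⟩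
    exact Ideal.mem_span_singleton.2 (hdvd y hy)
  obtain ⟨m, hm⟩ := hdvd x hx
  have hpm : ¬ p ∣ m := fun ⟨k, hk⟩ => hx2 ⟨k, by rw [hm, hk]; ring⟩
  obtain ⟨u, v, huv⟩ := hp.coprime_iff_not_dvd.2 hpm
  have hp_eq : p = u * p ^ 2 + v * Q.eval x := by
    rw [hm]
    linear_combination (-p) * huv
  rw [hp_eq]
  exact add_mem (Ideal.mul_mem_left _ _ (sq_mem_normIdeal hQ hpK))
    (Ideal.mul_mem_left _ _ (Ideal.subset_span ⟨x, hx, rfl⟩))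

section ModP

variable {p : ℕ} [Fact p.Prime] {N : TernaryForm} {A B : (Fin 3 → ℤ) →+ ZMod p}

theorem normIdeal_ker_eq (hN : N.Primitive)
    (hAB : ∀ x, ((N.eval x : ℤ) : ZMod p) = A x * B x) {x : Fin 3 → ℤ} (hAx : A x = 0)
    (hx : ¬ (p : ℤ) ^ 2 ∣ N.eval x) : N.normIdeal A.ker = Ideal.span {(p : ℤ)} := by
  refine normIdeal_eq_span_prime hN (Nat.prime_iff_prime_int.mp Fact.out) A.natCast_zsmul_mem_ker
    (fun y hy => ?_) hAx hx
  rw [← ZMod.intCast_zmod_eq_zero_iff_dvd, hAB, AddMonoidHom.mem_ker.1 hy, zero_mul]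

theorem le_ker_or_le_ker_of_normIdeal_eq
    (hAB : ∀ x, ((N.eval x : ℤ) : ZMod p) = A x * B x) {K : AddSubgroup (Fin 3 → ℤ)}
    (hK : N.normIdeal K = Ideal.span {(p : ℤ)}) : K ≤ A.ker ∨ K ≤ B.ker := by
  rw [← AddSubgroupClass.subset_union]
  intro x hx
  have hdvd : (p : ℤ) ∣ N.eval x := by
    rw [← Ideal.mem_span_singleton, ← hK]
    exact Ideal.subset_span ⟨x, hx, rfl⟩
  rw [← ZMod.intCast_zmod_eq_zero_iff_dvd, hAB] at hdvd
  exact mul_eq_zero.1 hdvd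

end ModP

end TernaryForm

theorem IsHyperbolic.exists_mod_factorization {p j : ℕ} [Fact p.Prime] {N : TernaryForm}
    (hN : IsHyperbolic p j N) (hj : 1 ≤ j) :
    ∃ (A B : (Fin 3 → ℤ) →+ ZMod p) (x₀ x₁ : Fin 3 → ℤ),
      (∀ x, ((N.eval x : ℤ) : ZMod p) = A x * B x) ∧
      (A x₀ = 0 ∧ B x₀ = 1 ∧ ¬ (p : ℤ) ^ 2 ∣ N.eval x₀) ∧
      (A x₁ = 1 ∧ B x₁ = 0 ∧ ¬ (p : ℤ) ^ 2 ∣ N.eval x₁) := by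
  obtain ⟨δ, -, B, hB⟩ := hN
  let π : ZMod (p ^ 2) →+* ZMod p := ZMod.castHom (dvd_pow_self p two_ne_zero) (ZMod p)
  let c (k : Fin 3) : (Fin 3 → ℤ) →+ ZMod (p ^ 2) :=
    (toZModPow 2).toAddMonoidHom.comp
      ((B.coord k).toAddMonoidHom.comp ((Int.castAddHom ℤ_[p]).compLeft (Fin 3)))
  have hc (x : Fin 3 → ℤ) (k : Fin 3) :
      c k x = toZModPow 2 (B.repr (fun i => (x i : ℤ_[p])) k) := rfl
  have hN2 (x : Fin 3 → ℤ) : ((N.eval x : ℤ) : ZMod (p ^ 2)) =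
      c 0 x * c 1 x + toZModPow 2 δ * (p : ZMod (p ^ 2)) ^ j * c 2 x ^ 2 := by
    rw [← map_intCast (toZModPow 2), N.eval_intCast, N.eval_eq_repr_mul_repr_add hB]
    simp [hc]
  have hNp (x : Fin 3 → ℤ) : ((N.eval x : ℤ) : ZMod p) = π (c 0 x) * π (c 1 x) := by
    rw [← map_intCast π, hN2, map_add, map_mul, map_mul, map_mul, map_pow, map_natCast,
      ZMod.natCast_self, zero_pow (by omega), mul_zero, zero_mul, add_zero]
  have hnd (x : Fin 3 → ℤ) (hx : ((N.eval x : ℤ) : ZMod (p ^ 2)) = p) :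
      ¬ (p : ℤ) ^ 2 ∣ N.eval x := by
    rintro ⟨m, hm⟩
    rw [hm, Int.cast_mul, Int.cast_pow, Int.cast_natCast, ← Nat.cast_pow, ZMod.natCast_self,
      zero_mul, eq_comm, ZMod.natCast_eq_zero_iff] at hx
    have h21 : 2 ≤ 1 := (Nat.pow_dvd_pow_iff_le_right (Fact.out : p.Prime).one_lt).1
      (by rwa [pow_one])
    omega
  obtain ⟨x₀, hx₀⟩ := B.exists_toZModPow_repr_intCast_eq 2 ![(p : ℤ_[p]), 1, 0]
  obtain ⟨x₁, hx₁⟩ := B.exists_toZModPow_repr_intCast_eq 2 ![1, (p : ℤ_[p]), 0]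
  have hc₀ : c 0 x₀ = p ∧ c 1 x₀ = 1 ∧ c 2 x₀ = 0 := by simp [hc, hx₀]
  have hc₁ : c 0 x₁ = 1 ∧ c 1 x₁ = p ∧ c 2 x₁ = 0 := by simp [hc, hx₁]
  refine ⟨π.toAddMonoidHom.comp (c 0), π.toAddMonoidHom.comp (c 1), x₀, x₁, hNp,
    ⟨?_, ?_, hnd x₀ ?_⟩, ⟨?_, ?_, hnd x₁ ?_⟩⟩ <;> simp [π, hN2, hc₀, hc₁]

theorem stmt_6_general (p : ℕ) [Fact p.Prime] (N : TernaryForm)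
    (hNprim : N.Primitive) (j : ℕ) (hj : 1 ≤ j) (hhyp : IsHyperbolic p j N) :
    ∃ K₁ K₂ : AddSubgroup (Fin 3 → ℤ), K₁ ≠ K₂ ∧
      (K₁.index = p ∧ N.normIdeal (K₁ : Set (Fin 3 → ℤ)) = Ideal.span {(p : ℤ)}) ∧
      (K₂.index = p ∧ N.normIdeal (K₂ : Set (Fin 3 → ℤ)) = Ideal.span {(p : ℤ)}) ∧
      ∀ K : AddSubgroup (Fin 3 → ℤ), K.index = p →
        N.normIdeal (K : Set (Fin 3 → ℤ)) = Ideal.span {(p : ℤ)} → K = K₁ ∨ K = K₂ := by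
  obtain ⟨A, B, x₀, x₁, hAB, ⟨hA₀, hB₀, hN₀⟩, ⟨hA₁, hB₁, hN₁⟩⟩ :=
    hhyp.exists_mod_factorization hj
  have hBA (x : Fin 3 → ℤ) : ((N.eval x : ℤ) : ZMod p) = B x * A x := by rw [hAB, mul_comm]
  have hA := A.index_ker_of_map_eq_one hA₁
  have hB := B.index_ker_of_map_eq_one hB₀
  refine ⟨A.ker, B.ker, fun h => ?_, ⟨hA, N.normIdeal_ker_eq hNprim hAB hA₀ hN₀⟩,
    ⟨hB, N.normIdeal_ker_eq hNprim hBA hB₁ hN₁⟩, fun K hK hKN => ?_⟩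
  · have hx₁ : x₁ ∈ A.ker := h ▸ hB₁
    exact one_ne_zero (hA₁.symm.trans hx₁)
  have hp : p ≠ 0 := (Fact.out : p.Prime).ne_zero
  refine (N.le_ker_or_le_ker_of_normIdeal_eq hAB hKN).imp (fun hle => ?_) (fun hle => ?_)
  · exact AddSubgroup.eq_of_le_of_index_eq hle (hK.trans hA.symm) (hK ▸ hp)
  · exact AddSubgroup.eq_of_le_of_index_eq hle (hK.trans hB.symm) (hK ▸ hp)

/-- If `N` is primitive and `p`-hyperbolic with exponent `j ≥ 1`, then there
are exactly two subgroups of `ℤ³` of index `p` with norm ideal `pℤ`. -/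
theorem stmt_6 (p : ℕ) [Fact p.Prime] (N : TernaryForm) (hN : N.PosDef)
    (hNprim : N.Primitive) (j : ℕ) (hj : 1 ≤ j) (hhyp : IsHyperbolic p j N) :
    ∃ K₁ K₂ : AddSubgroup (Fin 3 → ℤ), K₁ ≠ K₂ ∧
      (K₁.index = p ∧ N.normIdeal (K₁ : Set (Fin 3 → ℤ)) = Ideal.span {(p : ℤ)}) ∧
      (K₂.index = p ∧ N.normIdeal (K₂ : Set (Fin 3 → ℤ)) = Ideal.span {(p : ℤ)}) ∧
      ∀ K : AddSubgroup (Fin 3 → ℤ), K.index = p →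
        N.normIdeal (K : Set (Fin 3 → ℤ)) = Ideal.span {(p : ℤ)} → K = K₁ ∨ K = K₂ :=
  stmt_6_general p N hNprim j hj hhyp
end

section
/- Let p be a prime, m ≥ 0 an integer, and N a primitive positive definite ternary form which is p-hyperbolic with exponent m+1. Then there exist a ℤ-basis x₁, x₂, x₃ of ℤ³ and an integer d not divisible by p such that Q_N(a x₁ + b x₂ + c x₃) ≡ ab + d·p^{m+1}·c² (mod p^{m+2}) for all integers a, b, c. -/
/-!
Rescaling the third vector of a hyperbolic `ℤ_p`-basis by the inverse of its determinant (which
multiplies `δ` by a unit square) puts its matrix in `SL₃(ℤ_p)`. The reduction of that matrix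
modulo `p^{m+2}` lifts to `SL₃(ℤ)`, because `SL₃(ℤ) → SL₃(ℤ/N)` is surjective: a unimodular row
modulo `N` lifts to a primitive integral row, which is the first row of an integral matrix of
determinant one, and what is left is a `2 × 2` block, handled by the same row-lifting argument.
The columns of the lift form a `ℤ`-basis on which `Q_N` agrees with `ab + δ' p^{m+1} c²` modulo
`p^{m+2}`, where `δ'` is the rescaled unit, so `d` can be any integer congruent to `δ'`.
-/

open Matrix
open scoped MatrixGroups

-- `b` is a unit modulo `gcd(a, n)`; lift it to a unit `U` modulo `a`. Then `U - b` is a multiple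
-- of `gcd(a, n)`, so `U ≡ b + n t (mod a)` for some `t`.
lemma Int.exists_isCoprime_add_mul {a : ℤ} (b n : ℤ) (ha : a ≠ 0)
    (h : ∃ x y z : ℤ, x * a + y * b + z * n = 1) : ∃ t : ℤ, IsCoprime a (b + n * t) := by
  obtain ⟨x, y, z, hxyz⟩ := h
  have : NeZero a.natAbs := ⟨Int.natAbs_ne_zero.mpr ha⟩
  set g := Int.gcd a n
  have hb : IsUnit (b : ZMod g) := by
    have ha0 : (a : ZMod g) = 0 :=
      (ZMod.intCast_zmod_eq_zero_iff_dvd _ _).2 (Int.gcd_dvd_left a n)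
    have hn0 : (n : ZMod g) = 0 :=
      (ZMod.intCast_zmod_eq_zero_iff_dvd _ _).2 (Int.gcd_dvd_right a n)
    refine IsUnit.of_mul_eq_one (y : ZMod g) ?_
    have := congrArg (Int.cast : ℤ → ZMod g) hxyz
    push_cast [ha0, hn0] at this
    linear_combination this
  obtain ⟨u, hu⟩ := ZMod.unitsMap_surjective (Nat.gcd_dvd_left a.natAbs n.natAbs) hb.unit
  obtain ⟨U, hU⟩ := ZMod.intCast_surjective (u : ZMod a.natAbs)
  obtain ⟨k, hk⟩ : (g : ℤ) ∣ U - b := by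
    rw [← ZMod.intCast_eq_intCast_iff_dvd_sub]
    have := congrArg Units.val hu
    simp only [ZMod.unitsMap_def, Units.coe_map, ← hU, MonoidHom.coe_coe, map_intCast,
      IsUnit.unit_spec] at this
    exact this.symm
  have hUa : IsCoprime a U := by
    have := (ZMod.coe_int_isUnit_iff_isCoprime U a.natAbs).1 (hU ▸ u.isUnit)
    rwa [Int.natCast_natAbs, IsCoprime.abs_left_iff] at this
  refine ⟨Int.gcdB a n * k, ?_⟩
  have hbU : b + n * (Int.gcdB a n * k) = U + a * (-(Int.gcdA a n * k)) := by
    linear_combination (-1) * hk - k * Int.gcd_eq_gcd_ab a n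
  rw [hbU]
  exact hUa.add_mul_left_right _

lemma ZMod.exists_ne_zero_intCast_eq (N : ℕ) [NeZero N] (x : ZMod N) :
    ∃ a : ℤ, a ≠ 0 ∧ (a : ZMod N) = x := by
  obtain ⟨a, rfl⟩ := ZMod.intCast_surjective x
  rcases eq_or_ne a 0 with rfl | ha
  · exact ⟨N, by exact_mod_cast NeZero.ne N, by simp⟩
  · exact ⟨a, ha, rfl⟩

lemma ZMod.exists_isCoprime_intCast_eq {N : ℕ} [NeZero N] {x y : ZMod N} (h : IsCoprime x y) :
    ∃ a b : ℤ, IsCoprime a b ∧ (a : ZMod N) = x ∧ (b : ZMod N) = y := by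
  obtain ⟨a, ha, rfl⟩ := ZMod.exists_ne_zero_intCast_eq N x
  obtain ⟨b, rfl⟩ := ZMod.intCast_surjective y
  obtain ⟨u, v, huv⟩ := h
  obtain ⟨u, rfl⟩ := ZMod.intCast_surjective u
  obtain ⟨v, rfl⟩ := ZMod.intCast_surjective v
  obtain ⟨k, hk⟩ : (N : ℤ) ∣ 1 - (u * a + v * b) := by
    rw [← ZMod.intCast_eq_intCast_iff_dvd_sub]
    push_cast
    exact huv
  obtain ⟨t, ht⟩ := Int.exists_isCoprime_add_mul b N ha ⟨u, v, k, by linear_combination -hk⟩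
  exact ⟨a, b + N * t, ht, rfl, by simp⟩

lemma Int.not_dvd_of_isUnit_intCast_pow {p k : ℕ} (hp : p.Prime) (hk : k ≠ 0) {d : ℤ}
    (hd : IsUnit (d : ZMod (p ^ k))) : ¬ (p : ℤ) ∣ d := by
  rintro ⟨e, rfl⟩
  rw [Int.cast_mul, Int.cast_natCast] at hd
  exact ZMod.prime_natCast_not_isUnit_pow hp (Nat.pos_of_ne_zero hk) (isUnit_of_mul_isUnit_left hd)

namespace Matrix.SpecialLinearGroup

theorem map_intCast_surjective_fin_two (N : ℕ) [NeZero N] :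
    Function.Surjective (map (n := Fin 2) (Int.castRingHom (ZMod N))) := by
  intro M
  have hdet : M 0 0 * M 1 1 - M 0 1 * M 1 0 = 1 := by rw [← det_fin_two]; exact M.det_coe
  obtain ⟨a, b, ⟨x, y, hxy⟩, ha, hb⟩ := ZMod.exists_isCoprime_intCast_eq (x := M 0 0)
    (y := M 0 1) ⟨M 1 1, -M 1 0, by linear_combination hdet⟩
  obtain ⟨c, hc⟩ := ZMod.intCast_surjective (M 1 0)
  obtain ⟨d, hd⟩ := ZMod.intCast_surjective (M 1 1)
  rw [← ha, ← hb, ← hc, ← hd] at hdet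
  have hxy' : (x : ZMod N) * a + y * b = 1 := by
    exact_mod_cast congrArg (Int.cast : ℤ → ZMod N) hxy
  -- `(-y, x)` completes the row `(a, b)`; adding `c x + d y` times `(a, b)` to it makes it
  -- congruent to `(c, d)` modulo `N`
  set X : Matrix (Fin 2) (Fin 2) ℤ := !![a, b; (c * x + d * y) * a - y, (c * x + d * y) * b + x]
  have hX : X.det = 1 := by rw [det_fin_two_of]; linear_combination hxy
  refine ⟨⟨X, hX⟩, ext _ _ fun i j => ?_⟩
  change ((X i j : ℤ) : ZMod N) = M i j
  fin_cases i <;> fin_cases j <;>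
    simp only [X, of_apply, cons_val', cons_val_zero, cons_val_one, cons_val_fin_one, Fin.zero_eta,
      Fin.mk_one, Fin.isValue, Int.cast_sub, Int.cast_mul, Int.cast_add, ← ha, ← hb, ← hc, ← hd]
  · linear_combination (c : ZMod N) * hxy' + (y : ZMod N) * hdet
  · linear_combination (d : ZMod N) * hxy' - (x : ZMod N) * hdet

lemma exists_row_zero_eq_fin_three {g a b c : ℤ} (hab : IsCoprime a b) (hgc : IsCoprime g c) :
    ∃ S : SL(3, ℤ), (S : Matrix (Fin 3) (Fin 3) ℤ) 0 = ![g * a, g * b, c] := by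
  obtain ⟨P, Q, hPQ⟩ := hab
  obtain ⟨U, V, hUV⟩ := hgc
  -- its determinant is `(g U + c V) (P a + Q b)`
  set S : Matrix (Fin 3) (Fin 3) ℤ := !![g * a, g * b, c; -Q, P, 0; -V * a, -V * b, U]
  have hS : S.det = 1 := by
    simp only [det_fin_three, S, of_apply, cons_val', cons_val_zero, cons_val_one, cons_val,
      cons_val_fin_one]
    linear_combination (g * U + c * V) * hPQ + hUV
  exact ⟨⟨S, hS⟩, by ext j; fin_cases j <;> rfl⟩

lemma exists_row_zero_intCast_eq_fin_three {N : ℕ} [NeZero N] (v : Fin 3 → ZMod N)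
    (hv : ∃ w, v ⬝ᵥ w = 1) : ∃ S : SL(3, ℤ), ∀ j, ((S 0 j : ℤ) : ZMod N) = v j := by
  obtain ⟨a₀, ha₀, h₀⟩ := ZMod.exists_ne_zero_intCast_eq N (v 0)
  obtain ⟨a₁, h₁⟩ := ZMod.intCast_surjective (v 1)
  obtain ⟨a₂, h₂⟩ := ZMod.intCast_surjective (v 2)
  obtain ⟨g, a, b, hg, hab, rfl, rfl⟩ :=
    Int.exists_gcd_one' (n := a₁) (Int.gcd_pos_iff.2 (Or.inl ha₀))
  obtain ⟨w, hw⟩ := hv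
  obtain ⟨w₀, hw₀⟩ := ZMod.intCast_surjective (w 0)
  obtain ⟨w₁, hw₁⟩ := ZMod.intCast_surjective (w 1)
  obtain ⟨w₂, hw₂⟩ := ZMod.intCast_surjective (w 2)
  obtain ⟨k, hk⟩ : (N : ℤ) ∣ 1 - ((a * w₀ + b * w₁) * g + w₂ * a₂) := by
    rw [← ZMod.intCast_eq_intCast_iff_dvd_sub, Int.cast_one, ← hw, vec3_dotProduct, ← h₀, ← h₁,
      ← h₂, ← hw₀, ← hw₁, ← hw₂]
    push_cast
    ring
  have hg0 : (g : ℤ) ≠ 0 := by exact_mod_cast hg.ne'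
  obtain ⟨t, ht⟩ :=
    Int.exists_isCoprime_add_mul a₂ N hg0 ⟨a * w₀ + b * w₁, w₂, k, by linear_combination -hk⟩
  obtain ⟨S, hS⟩ := exists_row_zero_eq_fin_three (Int.isCoprime_iff_gcd_eq_one.2 hab) ht
  refine ⟨S, fun j => ?_⟩
  rw [hS]
  fin_cases j <;> simp [← h₀, ← h₁, ← h₂, mul_comm]

lemma exists_map_intCast_eq_of_row_zero {N : ℕ} [NeZero N] (T : SL(3, ZMod N))
    (hT : (T : Matrix (Fin 3) (Fin 3) (ZMod N)) 0 = ![1, 0, 0]) :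
    ∃ X : SL(3, ℤ), map (Int.castRingHom (ZMod N)) X = T := by
  have hT0 : ∀ j, T 0 j = ![1, 0, 0] j := fun j => congrFun hT j
  have hB : det !![T 1 1, T 1 2; T 2 1, T 2 2] = 1 := by
    have := T.det_coe
    rw [det_fin_three, hT0, hT0, hT0] at this
    simpa [det_fin_two_of] using this
  obtain ⟨Y, hY⟩ := map_intCast_surjective_fin_two N ⟨_, hB⟩
  have hYij : ∀ i j, ((Y i j : ℤ) : ZMod N) = !![T 1 1, T 1 2; T 2 1, T 2 2] i j :=
    fun i j => congrArg (fun Z : SL(2, ZMod N) => Z i j) hY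
  obtain ⟨c₁, hc₁⟩ := ZMod.intCast_surjective (T 1 0)
  obtain ⟨c₂, hc₂⟩ := ZMod.intCast_surjective (T 2 0)
  set X : Matrix (Fin 3) (Fin 3) ℤ := !![1, 0, 0; c₁, Y 0 0, Y 0 1; c₂, Y 1 0, Y 1 1]
  have hX : X.det = 1 := by
    rw [det_fin_three, ← Y.det_coe, det_fin_two]
    simp [X]
  refine ⟨⟨X, hX⟩, ext _ _ fun i j => ?_⟩
  change ((X i j : ℤ) : ZMod N) = T i j
  fin_cases i <;> fin_cases j <;> simp [X, hT0, hc₁, hc₂, hYij]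

theorem map_intCast_surjective_fin_three (N : ℕ) [NeZero N] :
    Function.Surjective (map (n := Fin 3) (Int.castRingHom (ZMod N))) := by
  intro M
  have hrow : (M : Matrix (Fin 3) (Fin 3) (ZMod N)) 0 ⬝ᵥ (fun k => adjugate M k 0) = 1 := by
    rw [← mul_apply', mul_adjugate, M.det_coe, one_smul, one_apply_eq]
  obtain ⟨S, hS⟩ := exists_row_zero_intCast_eq_fin_three _ ⟨_, hrow⟩
  set S' := map (Int.castRingHom (ZMod N)) S
  have hT : ((M * S'⁻¹ : SL(3, ZMod N)) : Matrix (Fin 3) (Fin 3) (ZMod N)) 0 = ![1, 0, 0] := by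
    have hMS : (M : Matrix (Fin 3) (Fin 3) (ZMod N)) 0 = (S' : Matrix (Fin 3) (Fin 3) (ZMod N)) 0 :=
      funext fun j => (hS j).symm
    ext j
    rw [coe_mul, mul_apply', hMS, ← mul_apply', ← coe_mul, mul_inv_cancel, coe_one]
    fin_cases j <;> rfl
  obtain ⟨X, hX⟩ := exists_map_intCast_eq_of_row_zero _ hT
  exact ⟨X * S, by rw [map_mul, hX, inv_mul_cancel_right]⟩

lemma smul_add_smul_add_smul_basisFun_map {R : Type*} [CommRing R] (X : SL(3, R)) (a b c : R) :
    let x := (Pi.basisFun R (Fin 3)).map (toLin' X)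
    a • x 0 + b • x 1 + c • x 2 = (X : Matrix (Fin 3) (Fin 3) R) *ᵥ ![a, b, c] := by
  ext i
  simp [toLin'_apply, mulVec, dotProduct, Fin.sum_univ_three, mul_comm]

end Matrix.SpecialLinearGroup

lemma TernaryForm.map_eval_mulVec {R S : Type*} [CommRing R] [CommRing S] (f : R →+* S)
    (Q : TernaryForm) (M : Matrix (Fin 3) (Fin 3) R) (v : Fin 3 → R) :
    f (Q.eval (M *ᵥ v)) = Q.eval (M.map f *ᵥ (f ∘ v)) := by
  simp only [TernaryForm.eval, map_add, map_mul, map_pow, map_intCast, RingHom.map_mulVec]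

lemma TernaryForm.map_eval_mulVec_eq {R R' S : Type*} [CommRing R] [CommRing R'] [CommRing S]
    (f : R →+* S) (g : R' →+* S) (Q : TernaryForm) {M : Matrix (Fin 3) (Fin 3) R}
    {M' : Matrix (Fin 3) (Fin 3) R'} (hM : M.map f = M'.map g) {v : Fin 3 → R} {v' : Fin 3 → R'}
    (hv : f ∘ v = g ∘ v') : f (Q.eval (M *ᵥ v)) = g (Q.eval (M' *ᵥ v')) := by
  rw [Q.map_eval_mulVec, Q.map_eval_mulVec, hM, hv]

lemma TernaryForm.exists_SL3_eval_mulVec_of_basis {R : Type*} [CommRing R] (N : TernaryForm)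
    (γ : R) (B : Module.Basis (Fin 3) R (Fin 3 → R))
    (hB : ∀ a b c : R, N.eval (a • B 0 + b • B 1 + c • B 2) = a * b + γ * c ^ 2) :
    ∃ (u : Rˣ) (V : SL(3, R)),
      ∀ v, N.eval ((V : Matrix (Fin 3) (Fin 3) R) *ᵥ v) = v 0 * v 1 + u * γ * v 2 ^ 2 := by
  set U := (Pi.basisFun R (Fin 3)).toMatrix B
  have hU : IsUnit U.det := by
    simpa only [Module.Basis.det_apply] using (Pi.basisFun R (Fin 3)).isUnit_det B
  set w := hU.unit
  set V := U * diagonal ![1, 1, (↑w⁻¹ : R)]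
  have hV : V.det = 1 := by
    simp [V, det_mul, det_diagonal, Fin.prod_univ_three, w]
  refine ⟨w⁻¹ * w⁻¹, ⟨V, hV⟩, fun v => ?_⟩
  have hVv : V *ᵥ v = v 0 • B 0 + v 1 • B 1 + (↑w⁻¹ * v 2) • B 2 := by
    ext i
    simp only [V, U, mulVec, dotProduct, mul_diagonal, Module.Basis.toMatrix_apply,
      Pi.basisFun_repr, Fin.sum_univ_three, cons_val_zero, cons_val_one, cons_val, mul_one,
      Pi.add_apply, Pi.smul_apply, smul_eq_mul]
    ring
  change N.eval (V *ᵥ v) = _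
  rw [hVv, hB]
  push_cast
  ring

theorem stmt_7_general (p : ℕ) [Fact p.Prime] (m : ℕ) (N : TernaryForm)
    (hhyp : IsHyperbolic p (m + 1) N) :
    ∃ (x : Module.Basis (Fin 3) ℤ (Fin 3 → ℤ)) (d : ℤ), ¬ (p : ℤ) ∣ d ∧
      ∀ a b c : ℤ, ((p : ℤ) ^ (m + 2)) ∣
        (N.eval (a • x 0 + b • x 1 + c • x 2) - (a * b + d * (p : ℤ) ^ (m + 1) * c ^ 2)) := by
  obtain ⟨δ, hδ, B, hB⟩ := hhyp
  obtain ⟨u, V, hV⟩ := N.exists_SL3_eval_mulVec_of_basis _ B hB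
  set π := PadicInt.toZModPow (p := p) (m + 2)
  obtain ⟨X, hX⟩ :=
    SpecialLinearGroup.map_intCast_surjective_fin_three _ (SpecialLinearGroup.map π V)
  have hXV : (X : Matrix (Fin 3) (Fin 3) ℤ).map (Int.castRingHom (ZMod (p ^ (m + 2)))) =
      (V : Matrix (Fin 3) (Fin 3) ℤ_[p]).map π :=
    congrArg Subtype.val hX
  obtain ⟨d, hd⟩ := ZMod.intCast_surjective (π (u * δ))
  refine ⟨(Pi.basisFun ℤ (Fin 3)).map (SpecialLinearGroup.toLin' X), d,
    Int.not_dvd_of_isUnit_intCast_pow Fact.out (by omega) (hd ▸ (u.isUnit.mul hδ).map π),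
    fun a b c => ?_⟩
  rw [SpecialLinearGroup.smul_add_smul_add_smul_basisFun_map, ← Nat.cast_pow,
    ← ZMod.intCast_zmod_eq_zero_iff_dvd]
  have hcast := N.map_eval_mulVec_eq _ _ hXV (v := ![a, b, c]) (v' := ![(a : ℤ_[p]), b, c])
    (by ext i; fin_cases i <;> simp [π])
  rw [eq_intCast, hV] at hcast
  push_cast
  rw [hcast]
  simp only [Fin.isValue, cons_val_zero, cons_val_one, cons_val, map_add, map_mul, map_intCast,
    map_pow, map_natCast, hd]
  ring

/-- A primitive `p`-hyperbolic form of exponent `m+1` admits a `ℤ`-basis in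
which it is congruent to `ab + d·p^{m+1}·c²` modulo `p^{m+2}`, with `p ∤ d`. -/
theorem stmt_7 (p : ℕ) [Fact p.Prime] (m : ℕ) (N : TernaryForm) (hN : N.PosDef)
    (hNprim : N.Primitive) (hhyp : IsHyperbolic p (m + 1) N) :
    ∃ (x : Module.Basis (Fin 3) ℤ (Fin 3 → ℤ)) (d : ℤ), ¬ (p : ℤ) ∣ d ∧
      ∀ a b c : ℤ, ((p : ℤ) ^ (m + 2)) ∣
        (N.eval (a • x 0 + b • x 1 + c • x 2) - (a * b + d * (p : ℤ) ^ (m + 1) * c ^ 2)) :=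
  stmt_7_general p m N hhyp
end

section
/- Let p be a prime and let N be a primitive positive definite ternary form which is p-hyperbolic with exponent j for some integer j ≥ 1. If K₁ and K₂ are two distinct subgroups of ℤ³ of index p with norm ideals 𝔫(K₁) = 𝔫(K₂) = pℤ, then {x ∈ ℤ³ : p divides Q_N(x)} = K₁ ∪ K₂. -/
/-!
Over `ℤ_p` the form is `ab + δ p^j c²` in suitable coordinates, so for `j ≥ 1` its reduction
mod `p` is the product `f · g` of two linear forms `ℤ³ → 𝔽_p`. Hence `p ∣ Q_N(x)` exactly on
`ker f ∪ ker g`, and primitivity makes `f` and `g` nonzero, so both kernels have index `p`.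
A subgroup on which `Q_N` vanishes mod `p` lies in this union, hence in one of the kernels
(no group is a union of two proper subgroups), and if it has index `p` it equals that kernel.
-/

namespace AddSubgroup

variable {G : Type*} [AddGroup G]

theorem le_or_le_of_subset_union {H A B : AddSubgroup G}
    (h : (H : Set G) ⊆ (A : Set G) ∪ (B : Set G)) : H ≤ A ∨ H ≤ B := by
  by_contra! hAB
  obtain ⟨x, hxH, hxA⟩ := SetLike.not_le_iff_exists.mp hAB.1
  obtain ⟨y, hyH, hyB⟩ := SetLike.not_le_iff_exists.mp hAB.2
  have hxB : x ∈ B := (h hxH).resolve_left hxA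
  have hyA : y ∈ A := (h hyH).resolve_right hyB
  rcases h (H.add_mem hxH hyH) with hA | hB
  · exact hxA ((A.add_mem_cancel_right hyA).mp hA)
  · exact hyB ((B.add_mem_cancel_left hxB).mp hB)

theorem eq_of_le_of_index_eq_s9 {H K : AddSubgroup G} (hle : H ≤ K) (hidx : H.index = K.index)
    (hH : H.index ≠ 0) : H = K := by
  refine le_antisymm hle (relIndex_eq_one.mp ?_)
  have hmul := relIndex_mul_index hle
  rw [← hidx] at hmul
  exact (Nat.mul_eq_right hH).mp hmul

end AddSubgroup

theorem AddMonoidHom.index_ker_of_ne_zero {G : Type*} [AddGroup G] {p : ℕ} [Fact p.Prime]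
    {f : G →+ ZMod p} (hf : f ≠ 0) : f.ker.index = p := by
  have : Fact (Nat.card (ZMod p)).Prime := by rwa [Nat.card_zmod]
  rcases f.range.eq_bot_or_eq_top_of_prime_card with hbot | htop
  · exact absurd (range_eq_bot_iff.mp hbot) hf
  · rw [AddSubgroup.index_ker, htop, AddSubgroup.card_top, Nat.card_zmod]

theorem AddMonoidHom.eq_ker_of_le_ker {G : Type*} [AddGroup G] {p : ℕ} [hp : Fact p.Prime]
    {f : G →+ ZMod p} (hf : f ≠ 0) {K : AddSubgroup G} (hK : K ≤ f.ker) (hidx : K.index = p) :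
    K = f.ker :=
  AddSubgroup.eq_of_le_of_index_eq_s9 hK (by rw [hidx, f.index_ker_of_ne_zero hf])
    (hidx ▸ hp.out.ne_zero)

namespace TernaryForm

theorem eval_comp_ringHom {R S : Type*} [CommRing R] [CommRing S] (Q : TernaryForm)
    (φ : R →+* S) (v : Fin 3 → R) : Q.eval (φ ∘ v) = φ (Q.eval v) := by
  simp only [eval, Function.comp_apply, map_add, map_mul, map_pow, map_intCast]

theorem dvd_eval_of_normIdeal_eq {Q : TernaryForm} {K : Set (Fin 3 → ℤ)} {n : ℤ}
    (hK : Q.normIdeal K = Ideal.span {n}) {x : Fin 3 → ℤ} (hx : x ∈ K) : n ∣ Q.eval x := by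
  rw [← Ideal.mem_span_singleton, ← hK]
  exact Ideal.subset_span ⟨x, hx, rfl⟩

theorem Primitive.exists_not_dvd {Q : TernaryForm} (hQ : Q.Primitive) {n : ℤ}
    (hn : ¬IsUnit n) : ∃ v, ¬n ∣ Q.eval v := by
  by_contra! hdvd
  refine hn (Ideal.span_singleton_eq_top.mp (top_le_iff.mp ?_))
  rw [← hQ, normIdeal, Ideal.span_le]
  rintro _ ⟨v, -, rfl⟩
  exact Ideal.mem_span_singleton.mpr (hdvd v)

end TernaryForm

theorem IsHyperbolic.exists_eval_eq_mul {p : ℕ} [Fact p.Prime] {j : ℕ} {N : TernaryForm}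
    (hN : IsHyperbolic p j N) (hj : j ≠ 0) :
    ∃ f g : (Fin 3 → ℤ) →+ ZMod p, ∀ v : Fin 3 → ℤ, ((N.eval v : ℤ) : ZMod p) = f v * g v := by
  obtain ⟨δ, -, B, hB⟩ := hN
  let ι : (Fin 3 → ℤ) →+ (Fin 3 → ℤ_[p]) := (Int.castAddHom ℤ_[p]).compLeft (Fin 3)
  let coord (i : Fin 3) : (Fin 3 → ℤ) →+ ZMod p :=
    (PadicInt.toZMod.toAddMonoidHom.comp (B.coord i).toAddMonoidHom).comp ι
  refine ⟨coord 0, coord 1, fun v => ?_⟩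
  have hsum : B.repr (ι v) 0 • B 0 + B.repr (ι v) 1 • B 1 + B.repr (ι v) 2 • B 2 = ι v := by
    rw [← Fin.sum_univ_three (fun i => B.repr (ι v) i • B i), B.sum_repr]
  have hexpand : N.eval (ι v) =
      B.repr (ι v) 0 * B.repr (ι v) 1 + δ * (p : ℤ_[p]) ^ j * B.repr (ι v) 2 ^ 2 := by
    rw [← hB, hsum]
  have hcast : N.eval (ι v) = ((N.eval v : ℤ) : ℤ_[p]) :=
    N.eval_comp_ringHom (Int.castRingHom ℤ_[p]) v
  have hreduce := congrArg PadicInt.toZMod hexpand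
  rw [hcast, map_intCast] at hreduce
  rw [hreduce]
  simp [coord, hj, Module.Basis.coord_apply]

theorem stmt_9_general (p : ℕ) [Fact p.Prime] (N : TernaryForm)
    (hNprim : N.Primitive) (j : ℕ) (hj : 1 ≤ j) (hhyp : IsHyperbolic p j N)
    (K₁ K₂ : AddSubgroup (Fin 3 → ℤ)) (hne : K₁ ≠ K₂)
    (h₁ : K₁.index = p) (h₂ : K₂.index = p)
    (hn₁ : N.normIdeal (K₁ : Set (Fin 3 → ℤ)) = Ideal.span {(p : ℤ)})
    (hn₂ : N.normIdeal (K₂ : Set (Fin 3 → ℤ)) = Ideal.span {(p : ℤ)}) :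
    {x : Fin 3 → ℤ | (p : ℤ) ∣ N.eval x} =
      (K₁ : Set (Fin 3 → ℤ)) ∪ (K₂ : Set (Fin 3 → ℤ)) := by
  obtain ⟨f, g, hfg⟩ := hhyp.exists_eval_eq_mul (by omega)
  have hlocus : ∀ v, (p : ℤ) ∣ N.eval v ↔ v ∈ f.ker ∨ v ∈ g.ker := fun v => by
    rw [← ZMod.intCast_zmod_eq_zero_iff_dvd, hfg, mul_eq_zero]
    rfl
  have hnonzero : f ≠ 0 ∧ g ≠ 0 := by
    obtain ⟨v, hv⟩ :=
      hNprim.exists_not_dvd (Nat.prime_iff_prime_int.mp (Fact.out : p.Prime)).not_isUnit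
    rw [hlocus, not_or] at hv
    exact ⟨fun hf => hv.1 (by simp [hf]), fun hg => hv.2 (by simp [hg])⟩
  have hclass : ∀ K : AddSubgroup (Fin 3 → ℤ), K.index = p →
      N.normIdeal (K : Set (Fin 3 → ℤ)) = Ideal.span {(p : ℤ)} → K = f.ker ∨ K = g.ker :=
    fun K hidx hnorm =>
      (AddSubgroup.le_or_le_of_subset_union fun x hx =>
          (hlocus x).mp (TernaryForm.dvd_eval_of_normIdeal_eq hnorm hx)).imp
        (f.eq_ker_of_le_ker hnonzero.1 · hidx) (g.eq_ker_of_le_ker hnonzero.2 · hidx)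
  have hlocus_eq : {x : Fin 3 → ℤ | (p : ℤ) ∣ N.eval x} = (f.ker : Set _) ∪ g.ker :=
    Set.ext hlocus
  rcases hclass K₁ h₁ hn₁ with rfl | rfl <;> rcases hclass K₂ h₂ hn₂ with rfl | rfl
  · exact absurd rfl hne
  · exact hlocus_eq
  · exact hlocus_eq.trans (Set.union_comm _ _)
  · exact absurd rfl hne

/-- For a primitive `p`-hyperbolic form of exponent `j ≥ 1`, the locus
`{x : p ∣ Q_N(x)}` is the union of the two index-`p` subgroups of norm `pℤ`. -/
theorem stmt_9 (p : ℕ) [Fact p.Prime] (N : TernaryForm) (hN : N.PosDef)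
    (hNprim : N.Primitive) (j : ℕ) (hj : 1 ≤ j) (hhyp : IsHyperbolic p j N)
    (K₁ K₂ : AddSubgroup (Fin 3 → ℤ)) (hne : K₁ ≠ K₂)
    (h₁ : K₁.index = p) (h₂ : K₂.index = p)
    (hn₁ : N.normIdeal (K₁ : Set (Fin 3 → ℤ)) = Ideal.span {(p : ℤ)})
    (hn₂ : N.normIdeal (K₂ : Set (Fin 3 → ℤ)) = Ideal.span {(p : ℤ)}) :
    {x : Fin 3 → ℤ | (p : ℤ) ∣ N.eval x} =
      (K₁ : Set (Fin 3 → ℤ)) ∪ (K₂ : Set (Fin 3 → ℤ)) :=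
  stmt_9_general p N hNprim j hj hhyp K₁ K₂ hne h₁ h₂ hn₁ hn₂
end

section
/- Let p be an odd prime and let N be a primitive positive definite ternary form such that there exist units ε₀, ε₁, ε₂ ∈ ℤ_p^× and a ℤ_p-basis y₁, y₂, y₃ of ℤ_p³ with Q_N(a y₁ + b y₂ + c y₃) = ε₀a² + pε₁b² + pε₂c² for all a, b, c ∈ ℤ_p. Then {x ∈ ℤ³ : p divides Q_N(x)} = Λ_p(N); in particular, for every positive integer k, the equation Q_N(x) = pk has a solution x ∈ ℤ³ if and only if it has a solution x ∈ Λ_p(N). -/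
/-!
Over `ℤ_p` write `Q_N = ε₀a² + d₁b² + d₂c²` with `ε₀` a unit and `p ∣ d₁, d₂`. If `p ∣ Q_N(x)` then
`p ∣ ε₀a(x)²`, so `p ∣ a(x)`, and then
`Q_N(x + z) - Q_N(z) = ε₀a(x)(a(x) + 2a(z)) + d₁(…) + d₂(…)` is divisible by `p` for every `z`.
Conversely `z = 0` in the definition of `Λ_p(N)` gives `p ∣ Q_N(x)`.
-/

lemma PadicInt.intCast_dvd_intCast_iff {p : ℕ} [Fact p.Prime] (n : ℤ) :
    (p : ℤ_[p]) ∣ (n : ℤ_[p]) ↔ (p : ℤ) ∣ n := by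
  rw [← PadicInt.norm_lt_one_iff_dvd, PadicInt.norm_int_lt_one_iff_dvd]

namespace TernaryForm

variable {R : Type*} [CommRing R] (Q : TernaryForm)

lemma eval_zero : Q.eval (0 : Fin 3 → R) = 0 := by
  simp [eval]

lemma intCast_eval_s13 (v : Fin 3 → ℤ) : ((Q.eval v : ℤ) : R) = Q.eval (fun i => (v i : R)) := by
  simp only [eval]
  push_cast
  ring

lemma eval_eq_of_basis {d₀ d₁ d₂ : R} (B : Module.Basis (Fin 3) R (Fin 3 → R))
    (hB : ∀ a b c : R, Q.eval (a • B 0 + b • B 1 + c • B 2) = d₀ * a ^ 2 + d₁ * b ^ 2 + d₂ * c ^ 2)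
    (w : Fin 3 → R) :
    Q.eval w = d₀ * B.repr w 0 ^ 2 + d₁ * B.repr w 1 ^ 2 + d₂ * B.repr w 2 ^ 2 := by
  rw [← hB, ← Fin.sum_univ_three (fun i => B.repr w i • B i), B.sum_repr]

end TernaryForm

lemma dvd_diag_add_sub_of_dvd {R : Type*} [CommRing R] {π ε d₁ d₂ : R} (hπ : Prime π)
    (hε : IsUnit ε) (hd₁ : π ∣ d₁) (hd₂ : π ∣ d₂) {u₀ u₁ u₂ : R} (v₀ v₁ v₂ : R)
    (hu : π ∣ ε * u₀ ^ 2 + d₁ * u₁ ^ 2 + d₂ * u₂ ^ 2) :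
    π ∣ (ε * (u₀ + v₀) ^ 2 + d₁ * (u₁ + v₁) ^ 2 + d₂ * (u₂ + v₂) ^ 2) -
      (ε * v₀ ^ 2 + d₁ * v₁ ^ 2 + d₂ * v₂ ^ 2) := by
  have hu₀ : π ∣ u₀ := by
    have : π ∣ ε * u₀ ^ 2 :=
      (dvd_add_left (dvd_mul_of_dvd_left hd₁ _)).mp
        ((dvd_add_left (dvd_mul_of_dvd_left hd₂ _)).mp hu)
    exact hπ.dvd_of_dvd_pow (hε.dvd_mul_left.mp this)
  have expand : (ε * (u₀ + v₀) ^ 2 + d₁ * (u₁ + v₁) ^ 2 + d₂ * (u₂ + v₂) ^ 2) -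
      (ε * v₀ ^ 2 + d₁ * v₁ ^ 2 + d₂ * v₂ ^ 2) =
      ε * u₀ * (u₀ + 2 * v₀) + d₁ * (u₁ * (u₁ + 2 * v₁)) + d₂ * (u₂ * (u₂ + 2 * v₂)) := by
    ring
  rw [expand]
  exact (((dvd_mul_of_dvd_right hu₀ ε).mul_right _).add (dvd_mul_of_dvd_left hd₁ _)).add
    (dvd_mul_of_dvd_left hd₂ _)

lemma dvd_eval_of_mem_lambdaSet {p : ℕ} {N : TernaryForm} {x : Fin 3 → ℤ}
    (hx : x ∈ LambdaSet p N) : (p : ℤ) ∣ N.eval x := by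
  simpa [N.eval_zero] using hx 0

lemma mem_lambdaSet_of_dvd_eval {p : ℕ} [Fact p.Prime] {N : TernaryForm} {ε₀ d₁ d₂ : ℤ_[p]}
    (hε₀ : IsUnit ε₀) (hd₁ : (p : ℤ_[p]) ∣ d₁) (hd₂ : (p : ℤ_[p]) ∣ d₂)
    (B : Module.Basis (Fin 3) ℤ_[p] (Fin 3 → ℤ_[p]))
    (hB : ∀ a b c : ℤ_[p], N.eval (a • B 0 + b • B 1 + c • B 2) =
      ε₀ * a ^ 2 + d₁ * b ^ 2 + d₂ * c ^ 2)
    {x : Fin 3 → ℤ} (hx : (p : ℤ) ∣ N.eval x) : x ∈ LambdaSet p N := by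
  intro z
  have hxz : (fun i => ((x + z) i : ℤ_[p])) =
      (fun i => (x i : ℤ_[p])) + fun i => (z i : ℤ_[p]) := by
    funext i
    push_cast [Pi.add_apply]
    rfl
  rw [← PadicInt.intCast_dvd_intCast_iff, N.intCast_eval_s13, N.eval_eq_of_basis B hB] at hx
  rw [← PadicInt.intCast_dvd_intCast_iff, Int.cast_sub, N.intCast_eval_s13, N.intCast_eval_s13, hxz,
    N.eval_eq_of_basis B hB, N.eval_eq_of_basis B hB, map_add]
  exact dvd_diag_add_sub_of_dvd PadicInt.prime_p hε₀ hd₁ hd₂ _ _ _ hx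

theorem stmt_13_general (p : ℕ) [Fact p.Prime] (N : TernaryForm)
    (h : ∃ ε₀ ε₁ ε₂ : ℤ_[p], IsUnit ε₀ ∧ IsUnit ε₁ ∧ IsUnit ε₂ ∧
      ∃ B : Module.Basis (Fin 3) ℤ_[p] (Fin 3 → ℤ_[p]),
        ∀ a b c : ℤ_[p], N.eval (a • B 0 + b • B 1 + c • B 2) =
          ε₀ * a ^ 2 + (p : ℤ_[p]) * ε₁ * b ^ 2 + (p : ℤ_[p]) * ε₂ * c ^ 2) :
    {x : Fin 3 → ℤ | (p : ℤ) ∣ N.eval x} = LambdaSet p N ∧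
      ∀ k : ℕ, 0 < k →
        ((∃ x : Fin 3 → ℤ, N.eval x = (p : ℤ) * k) ↔
          ∃ x ∈ LambdaSet p N, N.eval x = (p : ℤ) * k) := by
  obtain ⟨ε₀, ε₁, ε₂, hε₀, -, -, B, hB⟩ := h
  have hset : {x : Fin 3 → ℤ | (p : ℤ) ∣ N.eval x} = LambdaSet p N :=
    Set.ext fun _ => ⟨mem_lambdaSet_of_dvd_eval hε₀ (dvd_mul_right _ _) (dvd_mul_right _ _) B hB,
      dvd_eval_of_mem_lambdaSet⟩
  refine ⟨hset, fun k _ => ⟨fun ⟨x, hx⟩ => ⟨x, ?_, hx⟩, fun ⟨x, _, hx⟩ => ⟨x, hx⟩⟩⟩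
  exact hset ▸ ⟨k, hx⟩

/-- If `p` is odd and `N` is diagonalizable over `ℤ_p` as
`ε₀a² + pε₁b² + pε₂c²`, then `{x : p ∣ Q_N(x)} = Λ_p(N)`; in particular `Q_N(x) = pk`
is solvable in `ℤ³` iff it is solvable in `Λ_p(N)`. -/
theorem stmt_13 (p : ℕ) [Fact p.Prime] (hodd : p ≠ 2) (N : TernaryForm)
    (hN : N.PosDef) (hNprim : N.Primitive)
    (h : ∃ ε₀ ε₁ ε₂ : ℤ_[p], IsUnit ε₀ ∧ IsUnit ε₁ ∧ IsUnit ε₂ ∧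
      ∃ B : Module.Basis (Fin 3) ℤ_[p] (Fin 3 → ℤ_[p]),
        ∀ a b c : ℤ_[p], N.eval (a • B 0 + b • B 1 + c • B 2) =
          ε₀ * a ^ 2 + (p : ℤ_[p]) * ε₁ * b ^ 2 + (p : ℤ_[p]) * ε₂ * c ^ 2) :
    {x : Fin 3 → ℤ | (p : ℤ) ∣ N.eval x} = LambdaSet p N ∧
      ∀ k : ℕ, 0 < k →
        ((∃ x : Fin 3 → ℤ, N.eval x = (p : ℤ) * k) ↔
          ∃ x ∈ LambdaSet p N, N.eval x = (p : ℤ) * k) :=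
  stmt_13_general p N h
end
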